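/- Let k and n be positive integers. A tableau T ∈ T_n^k is uniquely determined by the sequence of its row-1 entries: if two tableaux in T_n^k have the same first row, they are equal. Moreover, an increasing sequence t_1 < t_2 < ⋯ < t_n with t_1 = 1 occurs as the row-1 entries (left to right) of some T ∈ T_n^k if and only if t_j ≤ 1 + (j−1)(k+1) for all 1 ≤ j ≤ n. -/

import Mathlib

open scoped Classical

/-- Number of North steps (letters `true`) among the first `i` letters of `w`. -/
def upCount (w : List Bool) (i : ℕ) : ℕ := (w.take i).count true

/-- Number of East steps (letters `false`) among the first `i` letters of `w`. -/
def rightCount (w : List Bool) (i : ℕ) : ℕ := (w.take i).count false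

/-- `w` is an `(m,n)`-Dyck path: a word with `n` North letters (`true`) and `m` East
letters (`false`), each of whose prefixes with `b` North and `a` East letters
satisfies `b*m - a*n ≥ 0`. -/
def IsDyck (m n : ℕ) (w : List Bool) : Prop :=
  w.length = m + n ∧ w.count true = n ∧
  ∀ i, n * rightCount w i ≤ m * upCount w i

/-- The rank of the `(i+1)`-st step (0-indexed `i`) of `w`, namely `b*m - a*n` where
`b` and `a` are the numbers of North and East letters among the first `i` letters. -/
def rank (m n : ℕ) (w : List Bool) (i : ℕ) : ℤ :=
  (m : ℤ) * upCount w i - (n : ℤ) * rightCount w i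

/-- The sweep map: list the steps of `w` in increasing order of their ranks. -/
def sweep (m n : ℕ) (w : List Bool) : List Bool :=
  (((List.range w.length).mergeSort
      (fun i j => decide (rank m n w i ≤ rank m n w j))).map
    (fun i => w.getD i false))

/-- The word `EN(w)`: list the steps of `w` in increasing order of their end ranks
(the end rank of the `(i+1)`-st step is `rank w (i+1)`). -/
def sweepEN (m n : ℕ) (w : List Bool) : List Bool :=
  (((List.range w.length).mergeSort
      (fun i j => decide (rank m n w (i + 1) ≤ rank m n w (j + 1)))).map
    (fun i => w.getD i false))

/-- One step of the filling algorithm: place entry `p.1` according to letter `p.2`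
(`true` = S : start a new column; `false` = W : put it below the smallest active
entry, an active entry being the current bottom entry of a column of height `< k+1`). -/
def fillStep (k : ℕ) (cols : List (List ℕ)) (p : ℕ × Bool) : List (List ℕ) :=
  if p.2 then cols ++ [[p.1]]
  else
    match ((List.range cols.length).filter
        (fun j => (cols.getD j []).length < k + 1)).argmin
        (fun j => (cols.getD j []).getLastD 0) with
    | none => cols
    | some j => cols.set j ((cols.getD j []) ++ [p.1])

/-- The state (list of columns, each recorded top to bottom) of the filling algorithm
after the entries `1, …, t` have been placed according to the first `t` letters of `w`. -/
def fillColsUpTo (k : ℕ) (w : List Bool) (t : ℕ) : List (List ℕ) :=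
  ((List.range t).map (fun i => (i + 1, w.getD i false))).foldl (fillStep k) []

/-- The final state of the filling algorithm on the word `w` (entries
`1, …, m+n-1` placed, i.e. all letters but the last one processed). -/
def fillCols (k : ℕ) (w : List Bool) : List (List ℕ) :=
  fillColsUpTo k w (w.length - 1)

/-- The tableau `T(D)` produced by the filling algorithm, as a function
(row, column) ↦ entry, rows and columns 0-indexed. -/
def fillTableau (k n : ℕ) (w : List Bool) : Fin (k + 1) → Fin n → ℕ :=
  fun i j => ((fillCols k w).getD j []).getD i 0

/-- `T` fills the `(k+1) × n` array with `1, …, (k+1)n`, increasing along rows and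
columns. -/
def IsFilling (k n : ℕ) (T : Fin (k + 1) → Fin n → ℕ) : Prop :=
  (∀ i j, T i j ∈ Finset.Icc 1 ((k + 1) * n)) ∧
  Function.Injective (fun p : Fin (k + 1) × Fin n => T p.1 p.2) ∧
  (∀ i, StrictMono (T i)) ∧
  (∀ j, StrictMono (fun i => T i j))

/-- For all entries `a < b < c < d` of `T` with `d` directly below `a`, the entries
`b` and `c` do not lie in the same column. -/
def NoBadQuadruple (k n : ℕ) (T : Fin (k + 1) → Fin n → ℕ) : Prop :=
  ∀ (i : Fin (k + 1)) (hi : (i : ℕ) + 1 < k + 1) (j : Fin n)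
    (r r' : Fin (k + 1)) (c : Fin n), r < r' →
      ¬ (T i j < T r c ∧ T r c < T r' c ∧ T r' c < T ⟨(i : ℕ) + 1, hi⟩ j)

/-- The family `𝒯ₙᵏ` of tableaux. -/
def IsFussTableau (k n : ℕ) (T : Fin (k + 1) → Fin n → ℕ) : Prop :=
  IsFilling k n T ∧ NoBadQuadruple k n T

/-- A value `r` is marked for `T` when `r - 1` is a bottom-row entry of `T`. -/
def Marked (k n : ℕ) (T : Fin (k + 1) → Fin n → ℕ) (r : ℕ) : Prop :=
  ∃ j : Fin n, T (Fin.last k) j + 1 = r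

/-- One move of the walk `w(T)` on the values `1, …, M` (where `M = m + n`):
from a row-1 entry `x` move to `r + 1` where `r` is the bottom entry of the column
of `x`; from an entry `x` of one of the rows `2, …, k+1` move to the largest
unmarked value `≤ r`, where `r` is the entry directly above `x`; from `x = M`
move to the largest unmarked value `< M`. -/
noncomputable def walkStep (k n M : ℕ) (T : Fin (k + 1) → Fin n → ℕ) (x : ℕ) : ℕ :=
  if h : ∃ j : Fin n, T 0 j = x then
    T (Fin.last k) (Classical.choose h) + 1
  else if h2 : ∃ p : Fin (k + 1) × Fin n, T p.1 p.2 = x then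
    let p := Classical.choose h2
    ((((Finset.Icc 1 M).filter
        (fun y => y ≤ T (⟨(p.1 : ℕ) - 1, lt_of_le_of_lt (Nat.sub_le _ _) p.1.2⟩ : Fin (k + 1)) p.2
          ∧ ¬ Marked k n T y))).max).getD 0
  else
    ((((Finset.Icc 1 M).filter (fun y => y < M ∧ ¬ Marked k n T y))).max).getD 0

/-- The area of the path `w`: the number of lattice cells of the `m × n` rectangle
lying below the path whose interiors lie entirely above the diagonal.
The cell in column `x` and row `y` (0-indexed) has its interior above the diagonal
iff `n*(x+1) ≤ m*y`, and lies below the path iff the `(y+1)`-st North step of `w`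
occurs before the `(x+1)`-st East step. -/
def nthLetterIdx (w : List Bool) (b : Bool) (j : ℕ) : ℕ :=
  (((List.range w.length).filter (fun i => w.getD i false = b))).getD j 0

def area (m n : ℕ) (w : List Bool) : ℕ :=
  ((Finset.range m ×ˢ Finset.range n).filter
    (fun p => n * (p.1 + 1) ≤ m * p.2 ∧
      nthLetterIdx w true p.2 < nthLetterIdx w false p.1)).card

/-- The reduction `red(T)`: delete column 1 and replace each remaining entry `i` by
`i` minus the number of column-1 entries smaller than `i`. -/
def red (k n : ℕ) (T : Fin (k + 1) → Fin n → ℕ) : Fin (k + 1) → Fin (n - 1) → ℕ :=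
  fun i j =>
    let v := T i ⟨(j : ℕ) + 1, by have := j.2; omega⟩
    v - (Finset.univ.filter
      (fun u : Fin (k + 1) => T u ⟨0, by have := j.2; omega⟩ < v)).card

/-- The (finite) set of `(m,n)`-Dyck paths as a `Finset` of words. -/
noncomputable def dyckFinset (m n : ℕ) : Finset (List Bool) :=
  ((Finset.univ : Finset (Fin (m + n) → Bool)).image List.ofFn).filter
    (fun w => IsDyck m n w)

/-!
For a filling with increasing columns, the Fuss condition says exactly that the map sending
each entry outside the bottom row to the entry directly below it is strictly increasing
(`IsFilling.noBadQuadruple_iff`). Call an entry active, at a given moment, if it lies outside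
the bottom row and its lower neighbour has not been placed yet. Placing the entries in
increasing order, every entry outside the first row is then put directly below the smallest
active entry, so the first row determines the tableau.

Conversely, this rule builds a tableau from any admissible first row `t`: `t j` starts column
`j`, any other entry goes below the smallest active entry. One exists whenever the next entry
`V + 1` is not a top: otherwise the entries `1, …, V` fill complete columns, say `c` of them,
so `V = c (k + 1)` and the bound `t c ≤ 1 + c (k + 1)` forces `t c = V + 1`. The bound is
necessary since the entries smaller than `t j` all lie in the `j` columns left of column `j`.
-/

section

variable {k n : ℕ}

def BelowStrictMono (T : Fin (k + 1) → Fin n → ℕ) : Prop :=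
  ∀ (i r : Fin k) (j c : Fin n), T r.castSucc c < T i.castSucc j → T r.succ c < T i.succ j

namespace IsFilling

variable {T : Fin (k + 1) → Fin n → ℕ}

lemma eq_and_eq_of_apply_eq (hT : IsFilling k n T) {i i' : Fin (k + 1)} {j j' : Fin n}
    (h : T i j = T i' j') : i = i' ∧ j = j' :=
  Prod.ext_iff.1 (@hT.2.1 (i, j) (i', j') h)

lemma exists_apply_eq (hT : IsFilling k n T) {v : ℕ} (hv : v ∈ Finset.Icc 1 ((k + 1) * n)) :
    ∃ i j, T i j = v := by
  have himage : Finset.univ.image (fun p : Fin (k + 1) × Fin n => T p.1 p.2) =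
      Finset.Icc 1 ((k + 1) * n) := by
    refine Finset.eq_of_subset_of_card_le ?_ ?_
    · intro v hv
      obtain ⟨p, -, rfl⟩ := Finset.mem_image.1 hv
      exact hT.1 p.1 p.2
    · simp [Finset.card_image_of_injective _ hT.2.1]
  rw [← himage] at hv
  obtain ⟨p, -, hp⟩ := Finset.mem_image.1 hv
  exact ⟨p.1, p.2, hp⟩

lemma noBadQuadruple_iff (hT : IsFilling k n T) :
    NoBadQuadruple k n T ↔ BelowStrictMono T := by
  constructor
  · intro hbad i r j c hlt
    refine lt_of_le_of_ne (not_lt.1 fun hgt => hbad r.castSucc r.succ.2 c i.castSucc i.succ j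
      Fin.castSucc_lt_succ ⟨hlt, hT.2.2.2 j Fin.castSucc_lt_succ, hgt⟩) fun heq => ?_
    obtain ⟨hi, rfl⟩ := hT.eq_and_eq_of_apply_eq heq
    rw [Fin.succ_inj.1 hi] at hlt
    exact lt_irrefl _ hlt
  · rintro hmono i hi j r r' c hrr' ⟨hab, hbc, hcd⟩
    obtain ⟨r, rfl⟩ : ∃ r₀ : Fin k, r₀.castSucc = r :=
      Fin.exists_castSucc_eq.2 (Fin.ne_last_of_lt hrr')
    have hbelow : T ⟨i + 1, hi⟩ j < T r.succ c := hmono r ⟨i, by omega⟩ c j hab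
    have hcol : T r.succ c ≤ T r' c :=
      (hT.2.2.2 c).monotone (Fin.castSucc_lt_iff_succ_le.1 hrr')
    omega

lemma apply_zero_le (hT : IsFilling k n T) (j : Fin n) : T 0 j ≤ 1 + j * (k + 1) := by
  have hsub : Finset.Icc 1 (T 0 j - 1) ⊆
      (Finset.univ ×ˢ Finset.Iio j).image (fun p : Fin (k + 1) × Fin n => T p.1 p.2) := by
    intro v hv
    have hv' := Finset.mem_Icc.1 hv
    have hTj := Finset.mem_Icc.1 (hT.1 0 j)
    obtain ⟨i, c, rfl⟩ := hT.exists_apply_eq (Finset.mem_Icc.2 ⟨hv'.1, by omega⟩)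
    refine Finset.mem_image.2 ⟨(i, c), Finset.mem_product.2 ⟨Finset.mem_univ _, ?_⟩, rfl⟩
    refine Finset.mem_Iio.2 (lt_of_not_ge fun hjc : j ≤ c => ?_)
    have h1 : T 0 j ≤ T 0 c := (hT.2.2.1 0).monotone hjc
    have h2 : T 0 c ≤ T i c := (hT.2.2.2 c).monotone (Fin.zero_le i)
    omega
  have := (Finset.card_le_card hsub).trans Finset.card_image_le
  simp only [Nat.card_Icc, Finset.card_product, Finset.card_univ, Fintype.card_fin,
    Fin.card_Iio] at this
  rw [Nat.mul_comm] at this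
  omega

end IsFilling

namespace IsFussTableau

variable {T T' : Fin (k + 1) → Fin n → ℕ}

lemma belowStrictMono (hT : IsFussTableau k n T) : BelowStrictMono T :=
  hT.1.noBadQuadruple_iff.1 hT.2

lemma apply_eq_of_agree_below (hT : IsFussTableau k n T) (hT' : IsFussTableau k n T')
    (h0 : ∀ j, T 0 j = T' 0 j) {v : ℕ} (hlt : ∀ i j, T i j < v → T' i j = T i j)
    (hlt' : ∀ i j, T' i j < v → T i j = T' i j) {i : Fin (k + 1)} {j : Fin n}
    (hv : T i j = v) : T' i j = v := by
  obtain rfl | ⟨i, rfl⟩ := Fin.eq_zero_or_eq_succ i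
  · rw [← h0, hv]
  obtain ⟨p, q, hpq⟩ := hT'.1.exists_apply_eq (hv ▸ hT.1.1 _ j)
  obtain rfl | ⟨p, rfl⟩ := Fin.eq_zero_or_eq_succ p
  · exact absurd (hT.1.eq_and_eq_of_apply_eq ((h0 q).trans (hpq.trans hv.symm))).1
      (Fin.succ_ne_zero i).symm
  have hge' : v ≤ T' i.succ j := not_lt.1 fun h => (hlt' _ _ h ▸ hv).not_lt h
  have hge : v ≤ T p.succ q := not_lt.1 fun h => (hlt _ _ h ▸ hpq).not_lt h
  rcases hge'.eq_or_lt with h | hv'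
  · exact h.symm
  rcases hge.eq_or_lt with h | hvT
  · obtain ⟨hpi, rfl⟩ := hT.1.eq_and_eq_of_apply_eq (h.symm.trans hv.symm)
    rwa [Fin.succ_inj.1 hpi] at hpq
  have ha : T' i.castSucc j = T i.castSucc j :=
    hlt _ _ (hv ▸ hT.1.2.2.2 j Fin.castSucc_lt_succ)
  have hb : T p.castSucc q = T' p.castSucc q :=
    hlt' _ _ (hpq ▸ hT'.1.2.2.2 q Fin.castSucc_lt_succ)
  have hab : T i.castSucc j ≤ T p.castSucc q := by
    by_contra! h
    have := hT.belowStrictMono i p j q h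
    omega
  have hba : T' p.castSucc q ≤ T' i.castSucc j := by
    by_contra! h
    have := hT'.belowStrictMono p i q j h
    omega
  obtain ⟨hip, rfl⟩ := hT.1.eq_and_eq_of_apply_eq (le_antisymm hab (by omega))
  rw [Fin.castSucc_inj.1 hip] at hv
  exact absurd hv hvT.ne'

theorem eq_of_apply_zero_eq (hT : IsFussTableau k n T) (hT' : IsFussTableau k n T')
    (h0 : ∀ j, T 0 j = T' 0 j) : T = T' := by
  have hagree : ∀ v, (∀ i j, T i j < v → T' i j = T i j) ∧
      (∀ i j, T' i j < v → T i j = T' i j) := by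
    intro v
    induction v with
    | zero => simp
    | succ v ih =>
      refine ⟨fun i j hij => ?_, fun i j hij => ?_⟩
      · rcases Nat.lt_succ_iff_lt_or_eq.1 hij with h | h
        · exact ih.1 i j h
        · rw [h, hT.apply_eq_of_agree_below hT' h0 ih.1 ih.2 h]
      · rcases Nat.lt_succ_iff_lt_or_eq.1 hij with h | h
        · exact ih.2 i j h
        · rw [h, hT'.apply_eq_of_agree_below hT (fun j => (h0 j).symm) ih.2 ih.1 h]
  funext i j
  exact ((hagree _).1 i j (Nat.lt_succ_self _)).symm

end IsFussTableau

variable {t : Fin n → ℕ} {V : ℕ}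

lemma exists_eq_succ_of_eq_mul_card (ht : StrictMono t)
    (hbound : ∀ j : Fin n, t j ≤ 1 + j * (k + 1)) (hV : V < (k + 1) * n)
    (hcard : V = (k + 1) * (Finset.univ.filter fun j => t j ≤ V).card) :
    ∃ j, t j = V + 1 := by
  set c := (Finset.univ.filter fun j => t j ≤ V).card
  have hcn : c < n := by
    by_contra! hnc
    have := Nat.mul_le_mul_left (k + 1) hnc
    omega
  refine ⟨⟨c, hcn⟩, le_antisymm ?_ (Nat.succ_le_of_lt (not_le.1 fun hle => ?_))⟩
  · have := hbound ⟨c, hcn⟩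
    simp only at this
    rw [Nat.mul_comm] at this
    omega
  · have hsub : Finset.Iic (⟨c, hcn⟩ : Fin n) ⊆ Finset.univ.filter fun j => t j ≤ V :=
      fun j hj => Finset.mem_filter.2 ⟨Finset.mem_univ j,
        (ht.monotone (Finset.mem_Iic.1 hj)).trans hle⟩
    have := Finset.card_le_card hsub
    simp only [Fin.card_Iic] at this
    omega

/-- `pos x` is the cell of the entry `x`. Outside the first row, `x` lies below some `y` such
that every entry `u < y` outside the bottom row got its lower neighbour before `x`: `y` was
the smallest active entry when `x` was placed. -/
def GreedyAt (t : Fin n → ℕ) (pos : ℕ → Fin (k + 1) × Fin n) (x : ℕ) : Prop :=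
  (∀ j, pos x = (0, j) ↔ x = t j) ∧
  ∀ (i : Fin k) (j : Fin n), pos x = (i.succ, j) →
    ∃ y ∈ Set.Ico 1 x, pos y = (i.castSucc, j) ∧
      ∀ u ∈ Set.Ico 1 y, ∀ (r : Fin k) (c : Fin n), pos u = (r.castSucc, c) →
        ∃ w ∈ Set.Ico 1 x, pos w = (r.succ, c)

def IsGreedyFilling (t : Fin n → ℕ) (V : ℕ) (pos : ℕ → Fin (k + 1) × Fin n) : Prop :=
  Set.InjOn pos (Set.Icc 1 V) ∧ ∀ x ∈ Set.Icc 1 V, GreedyAt t pos x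

variable {pos pos' : ℕ → Fin (k + 1) × Fin n}

lemma GreedyAt.congr {x : ℕ} (h : GreedyAt t pos x) (hpos : ∀ v ≤ x, pos' v = pos v) :
    GreedyAt t pos' x := by
  obtain ⟨htop, hbelow⟩ := h
  refine ⟨fun j => hpos x le_rfl ▸ htop j, fun i j hx => ?_⟩
  obtain ⟨y, hy, hyc, hmin⟩ := hbelow i j (hpos x le_rfl ▸ hx)
  refine ⟨y, hy, (hpos y hy.2.le).trans hyc, fun u hu r c hu' => ?_⟩
  obtain ⟨w, hw, hwc⟩ := hmin u hu r c ((hpos u (hu.2.trans hy.2).le).symm.trans hu')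
  exact ⟨w, hw, (hpos w hw.2.le).trans hwc⟩

lemma greedyAt_update_top (ht : Function.Injective t) {j : Fin n} (hj : t j = V + 1) :
    GreedyAt t (Function.update pos (V + 1) (0, j)) (V + 1) := by
  refine ⟨fun j' => ?_, fun i j' h => ?_⟩
  · rw [Function.update_self, ← hj, ht.eq_iff, Prod.mk.injEq]
    simp
  · rw [Function.update_self] at h
    exact absurd (congrArg Prod.fst h) (Fin.succ_ne_zero i).symm

lemma greedyAt_update_below {u : ℕ} {r : Fin k} {c : Fin n}
    (hu : u ∈ Set.Icc 1 V) (hpos : pos u = (r.castSucc, c))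
    (hmin : ∀ u' ∈ Set.Ico 1 u, ∀ (r' : Fin k) (c' : Fin n), pos u' = (r'.castSucc, c') →
      (r'.succ, c') ∈ pos '' Set.Icc 1 V)
    (hnew : ∀ j, t j ≠ V + 1) :
    GreedyAt t (Function.update pos (V + 1) (r.succ, c)) (V + 1) := by
  have hold : ∀ v ≤ V, Function.update pos (V + 1) (r.succ, c) v = pos v :=
    fun v hv => Function.update_of_ne (by omega) _ _
  refine ⟨fun j => ?_, fun i j hx => ?_⟩
  · rw [Function.update_self]
    simpa using (hnew j).symm
  · rw [Function.update_self, Prod.mk.injEq, Fin.succ_inj] at hx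
    obtain ⟨rfl, rfl⟩ := hx
    refine ⟨u, ⟨hu.1, Nat.lt_succ_of_le hu.2⟩, (hold u hu.2).trans hpos,
      fun u' hu' r' c' hpos' => ?_⟩
    have hu'V : u' ≤ V := (hu'.2.trans_le hu.2).le
    obtain ⟨w, hw, hwp⟩ := hmin u' hu' r' c' ((hold u' hu'V).symm.trans hpos')
    exact ⟨w, ⟨hw.1, Nat.lt_succ_of_le hw.2⟩, (hold w hw.2).trans hwp⟩

namespace IsGreedyFilling

lemma update (h : IsGreedyFilling t V pos) {p : Fin (k + 1) × Fin n}
    (hp : p ∉ pos '' Set.Icc 1 V) (hV : GreedyAt t (Function.update pos (V + 1) p) (V + 1)) :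
    IsGreedyFilling t (V + 1) (Function.update pos (V + 1) p) := by
  have hold : ∀ v ≤ V, Function.update pos (V + 1) p v = pos v :=
    fun v hv => Function.update_of_ne (by omega) _ _
  have hIcc : Set.Icc 1 (V + 1) = insert (V + 1) (Set.Icc 1 V) := by
    ext v; simp only [Set.mem_Icc, Set.mem_insert_iff]; omega
  refine ⟨?_, fun x hx => ?_⟩
  · rw [hIcc, Set.injOn_insert (by simp)]
    refine ⟨fun a ha b hb hab => h.1 ha hb ?_, ?_⟩
    · rwa [hold a ha.2, hold b hb.2] at hab
    · rwa [Function.update_self, Set.image_congr fun v hv => hold v hv.2]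
  · rcases (Set.mem_Icc.1 hx).2.lt_or_eq with hxV | rfl
    · exact (h.2 x ⟨hx.1, by omega⟩).congr fun v hv => hold v (by omega)
    · exact hV

lemma apply_eq_zero (h : IsGreedyFilling t V pos) {j : Fin n} (htj : t j ∈ Set.Icc 1 V) :
    pos (t j) = (0, j) :=
  ((h.2 _ htj).1 j).2 rfl

lemma le_of_mem_image (h : IsGreedyFilling t V pos) (i : Fin (k + 1)) {j : Fin n}
    (hij : (i, j) ∈ pos '' Set.Icc 1 V) : t j ≤ V := by
  induction i using Fin.induction with
  | zero =>
    obtain ⟨x, hx, hxj⟩ := hij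
    exact ((h.2 x hx).1 j).1 hxj ▸ hx.2
  | succ i ih =>
    obtain ⟨x, hx, hxj⟩ := hij
    obtain ⟨y, hy, hyj, -⟩ := (h.2 x hx).2 i j hxj
    exact ih ⟨y, ⟨hy.1, hy.2.le.trans hx.2⟩, hyj⟩

lemma image_eq_prod_of_not_exists_active (h : IsGreedyFilling t V pos) (ht : ∀ j, 1 ≤ t j)
    (hinactive : ∀ u ∈ Set.Icc 1 V, ∀ (r : Fin k) (c : Fin n), pos u = (r.castSucc, c) →
      (r.succ, c) ∈ pos '' Set.Icc 1 V) :
    pos '' Set.Icc 1 V = Set.univ ×ˢ {j | t j ≤ V} := by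
  ext ⟨i, j⟩
  refine ⟨fun hij => ⟨trivial, h.le_of_mem_image i hij⟩, fun hj => ?_⟩
  replace hj : t j ≤ V := hj.2
  induction i using Fin.induction with
  | zero => exact ⟨t j, ⟨ht j, hj⟩, h.apply_eq_zero ⟨ht j, hj⟩⟩
  | succ i ih =>
    obtain ⟨u, hu, hui⟩ := ih
    exact hinactive u hu i j hui

lemma exists_active (h : IsGreedyFilling t V pos) (ht : StrictMono t) (ht1 : ∀ j, 1 ≤ t j)
    (hbound : ∀ j : Fin n, t j ≤ 1 + j * (k + 1)) (hV : V < (k + 1) * n)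
    (hnew : ∀ j, t j ≠ V + 1) :
    ∃ u ∈ Set.Icc 1 V, ∃ (r : Fin k) (c : Fin n),
      pos u = (r.castSucc, c) ∧ (r.succ, c) ∉ pos '' Set.Icc 1 V := by
  by_contra! hinactive
  have hcard := congrArg Set.ncard (h.image_eq_prod_of_not_exists_active ht1 hinactive)
  rw [h.1.ncard_image, Set.ncard_Icc_nat, Set.ncard_prod, Set.ncard_univ,
    Nat.card_eq_fintype_card, Fintype.card_fin, Set.ncard_eq_toFinset_card'] at hcard
  obtain ⟨j, hj⟩ := exists_eq_succ_of_eq_mul_card ht hbound hV (by simpa using hcard)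
  exact hnew j hj

lemma exists_succ (h : IsGreedyFilling t V pos) (ht : StrictMono t) (ht1 : ∀ j, 1 ≤ t j)
    (hbound : ∀ j : Fin n, t j ≤ 1 + j * (k + 1)) (hV : V < (k + 1) * n) :
    ∃ pos' : ℕ → Fin (k + 1) × Fin n, IsGreedyFilling t (V + 1) pos' := by
  by_cases htop : ∃ j, t j = V + 1
  · obtain ⟨j, hj⟩ := htop
    refine ⟨_, h.update (fun ⟨x, hx, hxj⟩ => ?_) (greedyAt_update_top ht.injective hj)⟩
    have := ((h.2 x hx).1 j).1 hxj
    exact absurd hx.2 (by omega)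
  · push Not at htop
    have hex := h.exists_active ht ht1 hbound hV htop
    obtain ⟨hu, r, c, hpos, hfree⟩ := Nat.find_spec hex
    refine ⟨_, h.update hfree (greedyAt_update_below hu hpos (fun u' hu' r' c' hpos' => ?_) htop)⟩
    by_contra hfree'
    exact Nat.find_min hex hu'.2 ⟨⟨hu'.1, hu'.2.le.trans hu.2⟩, r', c', hpos', hfree'⟩

lemma exists_isFussTableau (h : IsGreedyFilling t ((k + 1) * n) pos) (ht : StrictMono t) :
    ∃ T, IsFussTableau k n T ∧ ∀ j, T 0 j = t j := by
  have hsurj : ∀ p, ∃ v ∈ Set.Icc 1 ((k + 1) * n), pos v = p := by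
    have himage : pos '' Set.Icc 1 ((k + 1) * n) = Set.univ :=
      Set.eq_of_subset_of_ncard_le (Set.subset_univ _) (by simp [h.1.ncard_image])
    exact fun p => (Set.mem_image _ _ _).1 (himage ▸ Set.mem_univ p)
  choose T hT hposT using hsurj
  have hTpos : ∀ v ∈ Set.Icc 1 ((k + 1) * n), T (pos v) = v :=
    fun v hv => h.1 (hT _) hv (hposT _)
  have htop : ∀ j, T (0, j) = t j := fun j => ((h.2 _ (hT _)).1 j).1 (hposT _)
  have hbelow : ∀ (i : Fin k) (j : Fin n), T (i.castSucc, j) < T (i.succ, j) ∧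
      ∀ (r : Fin k) (c : Fin n), T (r.castSucc, c) < T (i.castSucc, j) →
        T (r.succ, c) < T (i.succ, j) := by
    intro i j
    obtain ⟨y, hy, hyp, hmin⟩ := (h.2 _ (hT _)).2 i j (hposT _)
    have hyT : T (i.castSucc, j) = y := hyp ▸ hTpos y ⟨hy.1, hy.2.le.trans (hT _).2⟩
    refine ⟨hyT ▸ hy.2, fun r c hrc => ?_⟩
    obtain ⟨w, hw, hwp⟩ := hmin _ ⟨(hT _).1, hyT ▸ hrc⟩ r c (hposT _)
    rw [← hwp, hTpos w ⟨hw.1, hw.2.le.trans (hT _).2⟩]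
    exact hw.2
  have hfill : IsFilling k n (fun i j => T (i, j)) := by
    refine ⟨fun i j => Finset.mem_Icc.2 (hT _), fun p q hpq => ?_, fun i => ?_, fun j => ?_⟩
    · rw [← hposT p, ← hposT q]
      exact congrArg pos hpq
    · induction i using Fin.induction with
      | zero => exact fun j j' hjj' => by simpa only [htop] using ht hjj'
      | succ i ih => exact fun j j' hjj' => (hbelow i j').2 i j (ih hjj')
    · exact Fin.strictMono_iff_lt_succ.2 fun i => (hbelow i j).1
  exact ⟨fun i j => T (i, j),
    ⟨hfill, hfill.noBadQuadruple_iff.2 fun i r j c => (hbelow i j).2 r c⟩, htop⟩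

end IsGreedyFilling

lemma exists_isGreedyFilling (hn : 0 < n) (ht : StrictMono t) (ht1 : ∀ j, 1 ≤ t j)
    (hbound : ∀ j : Fin n, t j ≤ 1 + j * (k + 1)) :
    ∀ V ≤ (k + 1) * n, ∃ pos : ℕ → Fin (k + 1) × Fin n, IsGreedyFilling t V pos := by
  intro V hV
  induction V with
  | zero => exact ⟨fun _ => (0, ⟨0, hn⟩), by simp [IsGreedyFilling]⟩
  | succ V ih =>
    obtain ⟨pos, h⟩ := ih (by omega)
    exact h.exists_succ ht ht1 hbound (by omega)

end

theorem statement10_general (k n : ℕ) (hn : 0 < n) :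
    (∀ T T' : Fin (k + 1) → Fin n → ℕ, IsFussTableau k n T → IsFussTableau k n T' →
      (∀ j, T 0 j = T' 0 j) → T = T') ∧
    (∀ t : Fin n → ℕ, StrictMono t → t ⟨0, hn⟩ = 1 →
      ((∃ T : Fin (k + 1) → Fin n → ℕ, IsFussTableau k n T ∧ ∀ j, T 0 j = t j) ↔
        ∀ j : Fin n, t j ≤ 1 + (j : ℕ) * (k + 1))) := by
  refine ⟨fun T T' hT hT' h0 => hT.eq_of_apply_zero_eq hT' h0, fun t ht ht0 => ⟨?_, ?_⟩⟩
  · rintro ⟨T, hT, hrow⟩ j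
    exact hrow j ▸ hT.1.apply_zero_le j
  · intro hbound
    have ht1 : ∀ j, 1 ≤ t j := fun j => ht0 ▸ ht.monotone (Nat.zero_le (j : ℕ))
    obtain ⟨pos, hfill⟩ := exists_isGreedyFilling hn ht ht1 hbound _ le_rfl
    exact hfill.exists_isFussTableau ht

/-- A tableau `T ∈ 𝒯ₙᵏ` is uniquely determined by its first row;
and an increasing sequence `t` with `t 1 = 1` occurs as the first row of some
`T ∈ 𝒯ₙᵏ` iff `t j ≤ 1 + (j-1)(k+1)` for all `j`. -/
theorem statement10 (k n : ℕ) (hk : 0 < k) (hn : 0 < n) :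
    (∀ T T' : Fin (k + 1) → Fin n → ℕ, IsFussTableau k n T → IsFussTableau k n T' →
      (∀ j, T 0 j = T' 0 j) → T = T') ∧
    (∀ t : Fin n → ℕ, StrictMono t → t ⟨0, hn⟩ = 1 →
      ((∃ T : Fin (k + 1) → Fin n → ℕ, IsFussTableau k n T ∧ ∀ j, T 0 j = t j) ↔
        ∀ j : Fin n, t j ≤ 1 + (j : ℕ) * (k + 1))) :=
  statement10_general k n hn
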